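/- arXiv:1603.04502 — 5 statements merged into one kernel-verified Lean document; each statement's English description precedes it below -/
import Mathlib

section
/- Let ε > 0 and let E : ℝ × ℝ² → ℝ² be any map. Suppose X, V : ℝ → ℝ² are differentiable at a point t₀ and satisfy X'(t₀) = V(t₀)/ε and V'(t₀) = V(t₀)^⊥/ε² + E(t₀, X(t₀))/ε. Then the map Z := X + ε V^⊥ is differentiable at t₀ and Z'(t₀) = (E(t₀, X(t₀)))^⊥. -/
/-- For `w = (w₁, w₂) ∈ ℝ²`, `perp w = (−w₂, w₁)`. -/
noncomputable def perp (w : EuclideanSpace ℝ (Fin 2)) : EuclideanSpace ℝ (Fin 2) :=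
  !₂[-w 1, w 0]

lemma perp_add (v w : EuclideanSpace ℝ (Fin 2)) : perp (v + w) = perp v + perp w := by
  ext i; fin_cases i <;> simp [perp]; ring

lemma perp_smul (c : ℝ) (w : EuclideanSpace ℝ (Fin 2)) : perp (c • w) = c • perp w := by
  ext i; fin_cases i <;> simp [perp]

lemma perp_perp (w : EuclideanSpace ℝ (Fin 2)) : perp (perp w) = -w := by
  ext i; fin_cases i <;> simp [perp]

noncomputable def perpL : EuclideanSpace ℝ (Fin 2) →L[ℝ] EuclideanSpace ℝ (Fin 2) :=
  LinearMap.toContinuousLinearMap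
    { toFun := perp
      map_add' := perp_add
      map_smul' := perp_smul }

lemma HasDerivAt.perp {f : ℝ → EuclideanSpace ℝ (Fin 2)} {f' : EuclideanSpace ℝ (Fin 2)}
    {t : ℝ} (hf : HasDerivAt f f' t) : HasDerivAt (fun s => _root_.perp (f s)) (_root_.perp f') t :=
  perpL.hasFDerivAt.comp_hasDerivAt t hf

/-- The gyration term `ε (V^⊥/ε²)^⊥ = -V/ε` cancels the drift `V/ε`. -/
lemma inv_smul_add_smul_perp_eq_perp {ε : ℝ} (hε : ε ≠ 0) (v e : EuclideanSpace ℝ (Fin 2)) :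
    ε⁻¹ • v + ε • perp ((ε ^ 2)⁻¹ • perp v + ε⁻¹ • e) = perp e := by
  have hcoeff : ε * (ε ^ 2)⁻¹ = ε⁻¹ := by field_simp
  simp only [perp_add, perp_smul, perp_perp, smul_add, smul_smul, smul_neg, hcoeff,
    mul_inv_cancel₀ hε, one_smul, add_neg_cancel_left]

/-- If `X, V : ℝ → ℝ²` are differentiable at `t₀` with `X'(t₀) = V(t₀)/ε` and
`V'(t₀) = V(t₀)^⊥/ε² + E(t₀, X(t₀))/ε`, then `Z = X + ε V^⊥` is differentiable at `t₀`
with `Z'(t₀) = (E(t₀, X(t₀)))^⊥`. -/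
theorem gyro_combination_ode (ε : ℝ) (hε : 0 < ε)
    (E : ℝ × EuclideanSpace ℝ (Fin 2) → EuclideanSpace ℝ (Fin 2))
    (X V : ℝ → EuclideanSpace ℝ (Fin 2)) (t₀ : ℝ)
    (hX : HasDerivAt X (ε⁻¹ • V t₀) t₀)
    (hV : HasDerivAt V ((ε ^ 2)⁻¹ • perp (V t₀) + ε⁻¹ • E (t₀, X t₀)) t₀) :
    HasDerivAt (fun t => X t + ε • perp (V t)) (perp (E (t₀, X t₀))) t₀ := by
  have hZ := hX.add (hV.perp.const_smul ε)
  rwa [inv_smul_add_smul_perp_eq_perp hε.ne'] at hZ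
end

section
/- Let f : ℝ² × ℝ² → [0,∞) be measurable with f(x,v) ≤ M for almost every (x,v), and set ρ(x) = ∫_{ℝ²} f(x,v) dv and K = ∫_{ℝ²}∫_{ℝ²} |v|² f(x,v) dx dv. Then ∫_{ℝ²} ρ(x)² dx ≤ 4π M K; in particular ‖ρ‖_{L²(ℝ²)} ≤ 2√π M^{1/2} K^{1/2}. -/
open MeasureTheory
open scoped ENNReal

noncomputable abbrev R2 : Type := EuclideanSpace ℝ (Fin 2)

/-!
Fix `x` and split the velocity integral at `|v|² = t`: on the disc `f ≤ M`, which contributes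
at most `π M t`, and outside it `f ≤ |v|² f / t`. Hence `ρ(x) ≤ π M t + g(x) / t` for every
`t > 0`, where `g(x) = ∫ |v|² f(x, v) dv`, and optimizing in `t` gives `ρ(x)² ≤ 4 π M g(x)`.
Integrating in `x` yields `∫ ρ² ≤ 4 π M K`.
-/

open scoped NNReal

/- The hypothesis at `t = ∞` reads `a ≤ c * ∞`, which rules out `c = 0 < a`; otherwise
`t = a / (2 * c)` is the optimal choice. -/
theorem ENNReal.sq_le_four_mul_mul_of_forall_le_add_div {a b c : ℝ≥0∞} (hc : c ≠ ∞)
    (h : ∀ t ≠ 0, a ≤ c * t + b / t) : a ^ 2 ≤ 4 * c * b := by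
  rcases eq_or_ne a 0 with rfl | ha0
  · simp
  have hc0 : c ≠ 0 := by
    rintro rfl
    simpa [ha0] using h ∞ top_ne_zero
  rcases eq_or_ne b ∞ with rfl | hb
  · simp [ENNReal.mul_top, hc0]
  have ha : a ≠ ∞ := ne_top_of_le_ne_top (by simp [hc, hb]) (h 1 one_ne_zero)
  lift a to ℝ≥0 using ha
  lift b to ℝ≥0 using hb
  lift c to ℝ≥0 using hc
  simp only [ne_eq, ENNReal.coe_eq_zero] at ha0 hc0
  have ht : a / (2 * c) ≠ 0 := by positivity
  have hopt := h ((a / (2 * c) : ℝ≥0) : ℝ≥0∞) (ENNReal.coe_ne_zero.2 ht)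
  rw [← ENNReal.coe_div ht, ← ENNReal.coe_mul, ← ENNReal.coe_add, ENNReal.coe_le_coe,
    ← NNReal.coe_le_coe] at hopt
  norm_cast
  rw [← NNReal.coe_le_coe]
  have ha_pos : (0 : ℝ) < a := by positivity
  have hc_pos : (0 : ℝ) < c := by positivity
  push_cast at hopt ⊢
  field_simp at hopt
  nlinarith

theorem ENNReal.ofReal_rpow_one_half (x : ℝ) :
    ENNReal.ofReal x ^ (1 / 2 : ℝ) = ENNReal.ofReal √x := by
  rcases le_total 0 x with hx | hx
  · rw [ENNReal.ofReal_rpow_of_nonneg hx (by norm_num), Real.sqrt_eq_rpow]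
  · simp [ENNReal.ofReal_of_nonpos hx, Real.sqrt_eq_zero'.2 hx]

theorem lintegral_le_mul_measure_setOf_lt_add_div {α : Type*} [MeasurableSpace α]
    {μ : Measure α} {φ w : α → ℝ≥0∞} {M t : ℝ≥0∞} (hw : Measurable w) (hw_fin : ∀ v, w v ≠ ∞)
    (hφ : ∀ᵐ v ∂μ, φ v ≤ M) (ht : t ≠ 0) :
    ∫⁻ v, φ v ∂μ ≤ M * μ {v | w v < t} + (∫⁻ v, w v * φ v ∂μ) / t := by
  have hS : MeasurableSet {v | w v < t} := measurableSet_lt hw measurable_const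
  rw [← lintegral_add_compl φ hS]
  gcongr
  · calc ∫⁻ v in {v | w v < t}, φ v ∂μ ≤ ∫⁻ _ in {v | w v < t}, M ∂μ :=
          lintegral_mono_ae (ae_restrict_of_ae hφ)
      _ = M * μ {v | w v < t} := setLIntegral_const _ _
  · calc ∫⁻ v in {v | w v < t}ᶜ, φ v ∂μ ≤ ∫⁻ v in {v | w v < t}ᶜ, t⁻¹ * (w v * φ v) ∂μ := by
          refine lintegral_mono_ae ((ae_restrict_iff' hS.compl).2 (.of_forall fun v hv => ?_))
          have htw : t ≤ w v := not_lt.1 hv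
          rw [← ENNReal.div_eq_inv_mul, ENNReal.le_div_iff_mul_le (.inl ht)
            (.inl (ne_top_of_le_ne_top (hw_fin v) htw)), mul_comm]
          gcongr
      _ = t⁻¹ * ∫⁻ v in {v | w v < t}ᶜ, w v * φ v ∂μ := lintegral_const_mul' _ _ (by simpa)
      _ ≤ (∫⁻ v, w v * φ v ∂μ) / t := by
          rw [ENNReal.div_eq_inv_mul]
          gcongr
          exact Measure.restrict_le_self

theorem volume_setOf_enorm_sq_lt_le (t : ℝ≥0∞) :
    volume {v : R2 | ‖v‖ₑ ^ 2 < t} ≤ ENNReal.ofReal Real.pi * t := by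
  induction t using ENNReal.recTopCoe with
  | top => simp [ENNReal.mul_top, Real.pi_pos]
  | coe s =>
    have hball : {v : R2 | ‖v‖ₑ ^ 2 < s} = Metric.ball 0 (NNReal.sqrt s) := by
      ext v
      rw [Set.mem_ofPred_eq, mem_ball_zero_iff, ← coe_nnnorm, NNReal.coe_lt_coe, enorm_eq_nnnorm,
        ← ENNReal.coe_pow, ENNReal.coe_lt_coe, ← NNReal.sqrt_lt_sqrt, NNReal.sqrt_sq]
    rw [hball, EuclideanSpace.volume_ball_fin_two, ENNReal.ofReal_coe_nnreal, ← ENNReal.coe_pow,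
      NNReal.sq_sqrt, mul_comm]

theorem sq_lintegral_le_four_pi_mul_lintegral_enorm_sq_mul {φ : R2 → ℝ≥0∞} {M : ℝ≥0∞}
    (hM : M ≠ ∞) (hφ : ∀ᵐ v, φ v ≤ M) :
    (∫⁻ v, φ v) ^ 2 ≤ 4 * ENNReal.ofReal Real.pi * M * ∫⁻ v, ‖v‖ₑ ^ 2 * φ v := by
  rw [mul_assoc 4]
  refine ENNReal.sq_le_four_mul_mul_of_forall_le_add_div (by finiteness) fun t ht => ?_
  calc _ ≤ M * volume {v : R2 | ‖v‖ₑ ^ 2 < t} + _ / t :=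
        lintegral_le_mul_measure_setOf_lt_add_div (by fun_prop) (fun _ => by finiteness) hφ ht
    _ ≤ M * (ENNReal.ofReal Real.pi * t) + _ / t := by
        gcongr
        exact volume_setOf_enorm_sq_lt_le t
    _ = _ := by ring

theorem density_L2_interpolation_general (f : R2 × R2 → ℝ) (M : ℝ) (hbdd : ∀ᵐ z ∂volume, f z ≤ M)
    (ρ : R2 → ℝ≥0∞) (hρ : ∀ x, ρ x = ∫⁻ v, ENNReal.ofReal (f (x, v)))
    (K : ℝ≥0∞) (hK : K = ∫⁻ x, ∫⁻ v, ENNReal.ofReal (‖v‖ ^ 2 * f (x, v))) :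
    (∫⁻ x, ρ x ^ 2) ≤ ENNReal.ofReal (4 * Real.pi * M) * K ∧
      (∫⁻ x, ρ x ^ 2) ^ (1 / 2 : ℝ)
        ≤ ENNReal.ofReal (2 * Real.sqrt Real.pi * Real.sqrt M) * K ^ (1 / 2 : ℝ) := by
  have hbdd_fiber : ∀ᵐ x : R2, ∀ᵐ v : R2, ENNReal.ofReal (f (x, v)) ≤ ENNReal.ofReal M := by
    rw [Measure.volume_eq_prod] at hbdd
    exact Measure.ae_ae_of_ae_prod (hbdd.mono fun _ => ENNReal.ofReal_le_ofReal)
  have hpointwise : ∀ᵐ x, ρ x ^ 2 ≤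
      ENNReal.ofReal (4 * Real.pi * M) * ∫⁻ v, ENNReal.ofReal (‖v‖ ^ 2 * f (x, v)) := by
    filter_upwards [hbdd_fiber] with x hx
    have hnorm_sq (v : R2) : ENNReal.ofReal (‖v‖ ^ 2) = ‖v‖ₑ ^ 2 := by
      rw [ENNReal.ofReal_pow (norm_nonneg v), ofReal_norm]
    simp_rw [hρ, ENNReal.ofReal_mul (sq_nonneg _), hnorm_sq]
    rw [ENNReal.ofReal_mul (by positivity), ENNReal.ofReal_mul (by norm_num), ENNReal.ofReal_ofNat]
    exact sq_lintegral_le_four_pi_mul_lintegral_enorm_sq_mul ENNReal.ofReal_ne_top hx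
  have hmain : (∫⁻ x, ρ x ^ 2) ≤ ENNReal.ofReal (4 * Real.pi * M) * K := by
    rw [hK, ← lintegral_const_mul' _ _ ENNReal.ofReal_ne_top]
    exact lintegral_mono_ae hpointwise
  refine ⟨hmain, ?_⟩
  calc (∫⁻ x, ρ x ^ 2) ^ (1 / 2 : ℝ) ≤ (ENNReal.ofReal (4 * Real.pi * M) * K) ^ (1 / 2 : ℝ) :=
        ENNReal.rpow_le_rpow hmain (by norm_num)
    _ = ENNReal.ofReal (2 * Real.sqrt Real.pi * Real.sqrt M) * K ^ (1 / 2 : ℝ) := by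
        rw [ENNReal.mul_rpow_of_nonneg _ _ (by norm_num), ENNReal.ofReal_rpow_one_half,
          Real.sqrt_mul (by positivity), Real.sqrt_mul (by norm_num),
          show (4 : ℝ) = 2 ^ 2 by norm_num, Real.sqrt_sq zero_le_two]

/-- Interpolation estimate: if `0 ≤ f ≤ M` a.e. on phase space `ℝ² × ℝ²`, with spatial
density `ρ(x) = ∫ f(x,v) dv` and kinetic energy `K = ∫∫ |v|² f dx dv`, then
`∫ ρ² ≤ 4π M K`; in particular `‖ρ‖_{L²} ≤ 2√π M^{1/2} K^{1/2}`. -/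
theorem density_L2_interpolation (f : R2 × R2 → ℝ) (hmeas : Measurable f)
    (hpos : ∀ z, 0 ≤ f z) (M : ℝ) (hbdd : ∀ᵐ z ∂volume, f z ≤ M)
    (ρ : R2 → ℝ≥0∞) (hρ : ∀ x, ρ x = ∫⁻ v, ENNReal.ofReal (f (x, v)))
    (K : ℝ≥0∞) (hK : K = ∫⁻ x, ∫⁻ v, ENNReal.ofReal (‖v‖ ^ 2 * f (x, v))) :
    (∫⁻ x, ρ x ^ 2) ≤ ENNReal.ofReal (4 * Real.pi * M) * K ∧
      (∫⁻ x, ρ x ^ 2) ^ (1 / 2 : ℝ)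
        ≤ ENNReal.ofReal (2 * Real.sqrt Real.pi * Real.sqrt M) * K ^ (1 / 2 : ℝ) :=
  density_L2_interpolation_general f M hbdd ρ hρ K hK
end

section
/- Let ρ : ℝ² → [0,∞) be measurable and integrable with ∫_{ℝ²} |x|² ρ(x) dx < ∞. Then ∫_{ℝ²}∫_{ℝ²} max(ln|x−y|, 0) ρ(x) ρ(y) dx dy ≤ 2 ( ∫_{ℝ²} ρ(x) dx )^{3/2} ( ∫_{ℝ²} |x|² ρ(x) dx )^{1/2}. -/
/-!
Since `ln₊ t ≤ t`, the kernel satisfies `ln₊ ‖x - y‖ ≤ ‖x‖ + ‖y‖`, so the double integral is at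
most `2 M ∫ ‖x‖ ρ` with `M = ∫ ρ`. Cauchy–Schwarz against the weight `ρ` bounds `∫ ‖x‖ ρ` by
`√M √(∫ ‖x‖² ρ)`.
-/

open MeasureTheory

theorem max_log_norm_sub_le_norm_add_norm {E : Type*} [SeminormedAddGroup E] (x y : E) :
    max (Real.log ‖x - y‖) 0 ≤ ‖x‖ + ‖y‖ :=
  max_le ((Real.log_le_self (norm_nonneg _)).trans (norm_sub_le x y)) (by positivity)

section Weighted

variable {α : Type*} [MeasurableSpace α] {μ : Measure α} {ρ g : α → ℝ}

theorem integrable_mul_of_integrable_sq_mul (hρ : 0 ≤ ρ) (hg : AEStronglyMeasurable g μ)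
    (hρi : Integrable ρ μ) (hgρ : Integrable (fun x => g x ^ 2 * ρ x) μ) :
    Integrable (fun x => g x * ρ x) μ := by
  refine (hρi.add hgρ).mono' (hg.mul hρi.aestronglyMeasurable) (.of_forall fun x => ?_)
  have habs : |g x| ≤ 1 + g x ^ 2 := by nlinarith [abs_nonneg (g x), sq_abs (g x)]
  calc ‖g x * ρ x‖ = |g x| * ρ x := by rw [norm_mul, Real.norm_of_nonneg (hρ x), Real.norm_eq_abs]
    _ ≤ (1 + g x ^ 2) * ρ x := mul_le_mul_of_nonneg_right habs (hρ x)
    _ = ρ x + g x ^ 2 * ρ x := by ring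

/-- Cauchy–Schwarz for the weight `ρ`, applied to `√ρ` and `g √ρ`. -/
theorem integral_mul_le_sqrt_integral_mul_sqrt_integral_sq_mul (hρ : 0 ≤ ρ) (hg0 : 0 ≤ g)
    (hg : AEStronglyMeasurable g μ) (hρi : Integrable ρ μ)
    (hgρ : Integrable (fun x => g x ^ 2 * ρ x) μ) :
    ∫ x, g x * ρ x ∂μ ≤ √(∫ x, ρ x ∂μ) * √(∫ x, g x ^ 2 * ρ x ∂μ) := by
  have hsqrt : AEStronglyMeasurable (fun x => √(ρ x)) μ :=
    Real.continuous_sqrt.comp_aestronglyMeasurable hρi.aestronglyMeasurable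
  have hf2 : MemLp (fun x => √(ρ x)) (ENNReal.ofReal 2) μ := by
    rw [ENNReal.ofReal_ofNat, memLp_two_iff_integrable_sq hsqrt]
    exact hρi.congr (.of_forall fun x => (Real.sq_sqrt (hρ x)).symm)
  have hg2 : MemLp (fun x => g x * √(ρ x)) (ENNReal.ofReal 2) μ := by
    rw [ENNReal.ofReal_ofNat,
      memLp_two_iff_integrable_sq (f := fun x => g x * √(ρ x)) (hg.mul hsqrt)]
    exact hgρ.congr (.of_forall fun x => by simp only [mul_pow, Real.sq_sqrt (hρ x)])
  have holder := integral_mul_le_Lp_mul_Lq_of_nonneg Real.HolderConjugate.two_two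
    (.of_forall fun x => Real.sqrt_nonneg (ρ x))
    (.of_forall fun x => mul_nonneg (hg0 x) (Real.sqrt_nonneg (ρ x))) hf2 hg2
  simp only [Real.rpow_two, mul_pow, Real.sq_sqrt (hρ _), ← Real.sqrt_eq_rpow] at holder
  refine le_of_eq (integral_congr_ae (.of_forall fun x => ?_)) |>.trans holder
  rw [mul_left_comm, Real.mul_self_sqrt (hρ x)]

end Weighted

section Kernel

variable {α : Type*} [MeasurableSpace α] {μ : Measure α} {ρ a : α → ℝ} {K : α → α → ℝ}

theorem integral_integral_mul_mul_le_of_le_add (hρ : 0 ≤ ρ) (hK0 : ∀ x y, 0 ≤ K x y)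
    (hK : ∀ x y, K x y ≤ a x + a y) (hρi : Integrable ρ μ)
    (haρ : Integrable (fun x => a x * ρ x) μ) :
    ∫ x, ∫ y, K x y * ρ x * ρ y ∂μ ∂μ ≤ 2 * (∫ x, ρ x ∂μ) * ∫ x, a x * ρ x ∂μ := by
  set M := ∫ x, ρ x ∂μ
  set A := ∫ x, a x * ρ x ∂μ
  have hKρ : ∀ x y, 0 ≤ K x y * ρ x * ρ y := fun x y =>
    mul_nonneg (mul_nonneg (hK0 x y) (hρ x)) (hρ y)
  have inner (x : α) : ∫ y, K x y * ρ x * ρ y ∂μ ≤ a x * ρ x * M + ρ x * A := by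
    have hbound : Integrable (fun y => a x * ρ x * ρ y + ρ x * (a y * ρ y)) μ :=
      (hρi.const_mul _).add (haρ.const_mul _)
    calc ∫ y, K x y * ρ x * ρ y ∂μ
        ≤ ∫ y, a x * ρ x * ρ y + ρ x * (a y * ρ y) ∂μ := by
          refine integral_mono_of_nonneg (.of_forall (hKρ x)) hbound (.of_forall fun y => ?_)
          calc K x y * ρ x * ρ y ≤ (a x + a y) * ρ x * ρ y :=
                mul_le_mul_of_nonneg_right (mul_le_mul_of_nonneg_right (hK x y) (hρ x)) (hρ y)
            _ = a x * ρ x * ρ y + ρ x * (a y * ρ y) := by ring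
      _ = a x * ρ x * M + ρ x * A := by
          rw [integral_add (hρi.const_mul _) (haρ.const_mul _), integral_const_mul,
            integral_const_mul]
  calc ∫ x, ∫ y, K x y * ρ x * ρ y ∂μ ∂μ
      ≤ ∫ x, a x * ρ x * M + ρ x * A ∂μ :=
        integral_mono_of_nonneg (.of_forall fun x => integral_nonneg (hKρ x))
          ((haρ.mul_const _).add (hρi.mul_const _)) (.of_forall inner)
    _ = 2 * M * A := by
        rw [integral_add (haρ.mul_const _) (hρi.mul_const _), integral_mul_const,
          integral_mul_const]
        ring

end Kernel

theorem log_plus_interaction_bound_general (ρ : R2 → ℝ)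
    (hpos : ∀ x, 0 ≤ ρ x) (hint : Integrable ρ)
    (hmom : Integrable fun x => ‖x‖ ^ 2 * ρ x) :
    ∫ x, ∫ y, max (Real.log ‖x - y‖) 0 * ρ x * ρ y
      ≤ 2 * (∫ x, ρ x) ^ (3 / 2 : ℝ) * Real.sqrt (∫ x, ‖x‖ ^ 2 * ρ x) := by
  have hnorm : AEStronglyMeasurable (fun x : R2 => ‖x‖) volume :=
    continuous_norm.aestronglyMeasurable
  have hM : 0 ≤ ∫ x, ρ x := integral_nonneg hpos
  have hpow : (∫ x, ρ x) ^ (3 / 2 : ℝ) = (∫ x, ρ x) * √(∫ x, ρ x) := by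
    rw [show (3 / 2 : ℝ) = 1 + 1 / 2 by norm_num, Real.rpow_add' hM (by norm_num),
      Real.rpow_one, Real.sqrt_eq_rpow]
  calc ∫ x, ∫ y, max (Real.log ‖x - y‖) 0 * ρ x * ρ y
      ≤ 2 * (∫ x, ρ x) * ∫ x, ‖x‖ * ρ x :=
        integral_integral_mul_mul_le_of_le_add hpos (fun _ _ => le_max_right _ _)
          max_log_norm_sub_le_norm_add_norm hint
          (integrable_mul_of_integrable_sq_mul hpos hnorm hint hmom)
    _ ≤ 2 * (∫ x, ρ x) * (√(∫ x, ρ x) * √(∫ x, ‖x‖ ^ 2 * ρ x)) := by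
        gcongr
        exact integral_mul_le_sqrt_integral_mul_sqrt_integral_sq_mul hpos
          (fun x => norm_nonneg x) hnorm hint hmom
    _ = 2 * (∫ x, ρ x) ^ (3 / 2 : ℝ) * √(∫ x, ‖x‖ ^ 2 * ρ x) := by
        rw [hpow]
        ring

/-- The positive part of the logarithmic interaction energy of a nonnegative density `ρ`
is controlled by its mass and second moment:
`∫∫ ln₊|x−y| ρ(x) ρ(y) dx dy ≤ 2 (∫ ρ)^{3/2} (∫ |x|² ρ)^{1/2}`. -/
theorem log_plus_interaction_bound (ρ : R2 → ℝ) (hmeas : Measurable ρ)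
    (hpos : ∀ x, 0 ≤ ρ x) (hint : Integrable ρ)
    (hmom : Integrable fun x => ‖x‖ ^ 2 * ρ x) :
    ∫ x, ∫ y, max (Real.log ‖x - y‖) 0 * ρ x * ρ y
      ≤ 2 * (∫ x, ρ x) ^ (3 / 2 : ℝ) * Real.sqrt (∫ x, ‖x‖ ^ 2 * ρ x) :=
  log_plus_interaction_bound_general ρ hpos hint hmom
end

section
/- Let ρ : ℝ² → [0,∞) be measurable, integrable and essentially bounded. Then for every x ∈ ℝ², | ∫_{ℝ²} ((x−y)/|x−y|²) ρ(y) dy | ≤ 2 √(2π) ‖ρ‖_{L¹(ℝ²)}^{1/2} ‖ρ‖_{L^∞(ℝ²)}^{1/2}. -/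
open MeasureTheory

/-!
Split the field integral at radius `R` around `x`. Near `x` bound `ρ` by `‖ρ‖_∞`; in polar
coordinates the kernel `1 / r` has `∫_{B_R} 1 / |x - y| dy = 2πR`. Away from `x` bound the kernel
by `1 / R`. This gives `|E(x)| ≤ 2π ‖ρ‖_∞ R + ‖ρ‖₁ / R` for every `R > 0`, and the infimum over
`R` of `aR + b/R` is `2√(ab)`.
-/

open Set Metric

section
variable {E : Type*} [NormedAddCommGroup E] [NormedSpace ℝ E] [Nontrivial E]
  [FiniteDimensional ℝ E] [MeasurableSpace E] [BorelSpace E] (μ : Measure E) [μ.IsAddHaarMeasure]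

theorem setLIntegral_ball_zero_inv_norm {n : ℕ} (hE : Module.finrank ℝ E = n + 2) {R : ℝ}
    (hR : 0 ≤ R) :
    ∫⁻ z in ball 0 R, ENNReal.ofReal ‖z‖⁻¹ ∂μ
      = ENNReal.ofReal ((n + 2) / (n + 1) * μ.real (ball 0 1) * R ^ (n + 1)) := by
  set g : ℝ → ℝ := (Iio R).indicator (·⁻¹)
  have hradial : ∀ y ∈ Ioi (0 : ℝ), y ^ (n + 1) • g y = (Iio R).indicator (· ^ n) y := by
    intro y (hy : 0 < y)
    by_cases hyR : y < R
    · simp [g, hyR, pow_succ, hy.ne']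
    · simp [g, hyR]
  have hint : IntegrableOn (fun y : ℝ ↦ y ^ (n + 1) • g y) (Ioi 0) := by
    rw [integrableOn_congr_fun hradial measurableSet_Ioi, IntegrableOn,
      integrable_indicator_iff measurableSet_Iio, IntegrableOn,
      Measure.restrict_restrict measurableSet_Iio, Iio_inter_Ioi]
    exact (continuous_pow n).integrableOn_Icc.mono_set Ioo_subset_Icc_self
  have hval : ∫ y in Ioi (0 : ℝ), y ^ (n + 1) • g y = R ^ (n + 1) / (n + 1) := by
    rw [setIntegral_congr_fun measurableSet_Ioi hradial,
      setIntegral_indicator measurableSet_Iio, Ioi_inter_Iio, ← integral_Ioc_eq_integral_Ioo,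
      ← intervalIntegral.integral_of_le hR, integral_pow]
    simp
  calc ∫⁻ z in ball 0 R, ENNReal.ofReal ‖z‖⁻¹ ∂μ = ∫⁻ z, ENNReal.ofReal (g ‖z‖) ∂μ := by
        rw [← lintegral_indicator measurableSet_ball]
        congr 1 with z
        by_cases hz : ‖z‖ < R <;> simp [g, hz, indicator]
    _ = ENNReal.ofReal (∫ z, g ‖z‖ ∂μ) := by
        refine (ofReal_integral_eq_lintegral_ofReal ?_ ?_).symm
        · rw [integrable_fun_norm_addHaar, hE]
          exact hint
        · exact .of_forall fun z ↦ indicator_apply_nonneg fun _ ↦ inv_nonneg.2 (norm_nonneg z)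
    _ = _ := by
        rw [integral_fun_norm_addHaar, hE, show n + 2 - 1 = n + 1 by omega, hval]
        congr 1
        simp only [smul_eq_mul, nsmul_eq_mul, Nat.cast_add, Nat.cast_ofNat]
        field_simp

theorem setLIntegral_ball_inv_norm_sub {n : ℕ} (hE : Module.finrank ℝ E = n + 2) (x : E) {R : ℝ}
    (hR : 0 ≤ R) :
    ∫⁻ y in ball x R, ENNReal.ofReal ‖x - y‖⁻¹ ∂μ
      = ENNReal.ofReal ((n + 2) / (n + 1) * μ.real (ball 0 1) * R ^ (n + 1)) := by
  rw [← setLIntegral_ball_zero_inv_norm μ hE hR, ← lintegral_indicator measurableSet_ball,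
    ← lintegral_indicator measurableSet_ball,
    ← lintegral_sub_left_eq_self ((ball 0 R).indicator fun z : E ↦ ENNReal.ofReal ‖z‖⁻¹) x]
  congr 1 with y
  simp only [indicator, mem_ball_iff_norm', zero_sub, norm_neg]
end

theorem setLIntegral_ball_inv_norm_sub_fin_two (x : EuclideanSpace ℝ (Fin 2)) {R : ℝ}
    (hR : 0 ≤ R) :
    ∫⁻ y in ball x R, ENNReal.ofReal ‖x - y‖⁻¹ = ENNReal.ofReal (2 * Real.pi * R) := by
  rw [setLIntegral_ball_inv_norm_sub volume (n := 0) (by simp) x hR, measureReal_def,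
    EuclideanSpace.volume_ball_fin_two]
  simp [Real.pi_nonneg]

section
variable {E : Type*} [NormedAddCommGroup E] [MeasurableSpace E] [OpensMeasurableSpace E]
  {μ : Measure E}

theorem lintegral_mul_inv_norm_sub_le {f : E → ℝ} {M : ℝ} (hf : 0 ≤ f) (hfi : Integrable f μ)
    (hfM : ∀ᵐ y ∂μ, f y ≤ M) (x : E) {R : ℝ} (hR : 0 < R) :
    ∫⁻ y, ENNReal.ofReal (f y * ‖x - y‖⁻¹) ∂μ
      ≤ ENNReal.ofReal M * ∫⁻ y in ball x R, ENNReal.ofReal ‖x - y‖⁻¹ ∂μ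
        + ENNReal.ofReal ((∫ y, f y ∂μ) / R) := by
  rw [← lintegral_add_compl _ measurableSet_ball]
  gcongr
  · calc ∫⁻ y in ball x R, ENNReal.ofReal (f y * ‖x - y‖⁻¹) ∂μ
        ≤ ∫⁻ y in ball x R, ENNReal.ofReal M * ENNReal.ofReal ‖x - y‖⁻¹ ∂μ := by
          refine lintegral_mono_ae ?_
          filter_upwards [ae_restrict_of_ae hfM] with y hy
          rw [← ENNReal.ofReal_mul' (by positivity)]
          gcongr
      _ = ENNReal.ofReal M * ∫⁻ y in ball x R, ENNReal.ofReal ‖x - y‖⁻¹ ∂μ :=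
          lintegral_const_mul' _ _ ENNReal.ofReal_ne_top
  · calc ∫⁻ y in (ball x R)ᶜ, ENNReal.ofReal (f y * ‖x - y‖⁻¹) ∂μ
        ≤ ∫⁻ y in (ball x R)ᶜ, ENNReal.ofReal (f y / R) ∂μ := by
          refine setLIntegral_mono' measurableSet_ball.compl fun y hy ↦ ?_
          rw [mem_compl_iff, mem_ball_iff_norm', not_lt] at hy
          rw [div_eq_mul_inv]
          gcongr
          exact hf y
      _ ≤ ∫⁻ y, ENNReal.ofReal (f y / R) ∂μ := setLIntegral_le_lintegral _ _
      _ = ENNReal.ofReal ((∫ y, f y ∂μ) / R) := by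
          rw [← integral_div, ofReal_integral_eq_lintegral_ofReal (hfi.div_const R)
            (.of_forall fun y ↦ div_nonneg (hf y) hR.le)]
end

theorem mul_sqrt_div_add_div_sqrt_div {a b : ℝ} (ha : 0 < a) (hb : 0 < b) :
    a * √(b / a) + b / √(b / a) = 2 * √(a * b) := by
  obtain ⟨s, hs, rfl⟩ : ∃ s > 0, a = s ^ 2 := ⟨√a, by positivity, (Real.sq_sqrt ha.le).symm⟩
  obtain ⟨t, ht, rfl⟩ : ∃ t > 0, b = t ^ 2 := ⟨√b, by positivity, (Real.sq_sqrt hb.le).symm⟩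
  rw [← div_pow, ← mul_pow, Real.sqrt_sq (by positivity), Real.sqrt_sq (by positivity)]
  field_simp
  ring

open Filter Topology in
/-- Perturbing `a` and `b` by `ε` covers `a = 0` or `b = 0`, where no optimal `R` exists. -/
theorem le_two_mul_sqrt_mul_of_forall_le_mul_add_div {I a b : ℝ} (ha : 0 ≤ a) (hb : 0 ≤ b)
    (h : ∀ R > 0, I ≤ a * R + b / R) : I ≤ 2 * √(a * b) := by
  have hε : ∀ ε > 0, I ≤ 2 * √((a + ε) * (b + ε)) := fun ε hε ↦ by
    have hR : 0 < √((b + ε) / (a + ε)) := by positivity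
    rw [← mul_sqrt_div_add_div_sqrt_div (by positivity) (by positivity)]
    refine (h _ hR).trans ?_
    gcongr <;> linarith
  have hlim : Tendsto (fun ε ↦ 2 * √((a + ε) * (b + ε))) (𝓝[>] 0) (𝓝 (2 * √(a * b))) := by
    refine tendsto_nhdsWithin_of_tendsto_nhds ?_
    convert (by fun_prop : Continuous fun ε : ℝ ↦ 2 * √((a + ε) * (b + ε))).tendsto 0 using 2
    simp
  exact ge_of_tendsto hlim (eventually_nhdsWithin_of_forall hε)

theorem field_Linfty_bound_general (ρ : R2 → ℝ) (hpos : ∀ x, 0 ≤ ρ x)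
    (hint : Integrable ρ) (hbdd : MemLp ρ ⊤ volume) (x : R2) :
    ‖∫ y, (‖x - y‖ ^ 2)⁻¹ • ρ y • (x - y)‖
      ≤ 2 * Real.sqrt (2 * Real.pi) * Real.sqrt (∫ y, ρ y)
        * Real.sqrt (eLpNorm ρ ⊤ volume).toReal := by
  rw [toReal_eLpNorm hbdd.1]
  set L := ∫ y, ρ y
  set M := lpNorm ρ ⊤ volume
  have hL : 0 ≤ L := integral_nonneg hpos
  have hM : 0 ≤ M := lpNorm_nonneg
  have hρM : ∀ᵐ y, ρ y ≤ M := (ae_le_lpNorm_exponent_top hbdd).mono fun y hy ↦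
    (Real.le_norm_self _).trans hy
  have hnorm (y : R2) : ‖(‖x - y‖ ^ 2)⁻¹ • ρ y • (x - y)‖ = ρ y * ‖x - y‖⁻¹ := by
    rw [norm_smul, norm_smul, norm_inv, norm_pow, norm_norm, Real.norm_of_nonneg (hpos y)]
    field_simp
  have hsplit : ∀ R > 0,
      ‖∫ y, (‖x - y‖ ^ 2)⁻¹ • ρ y • (x - y)‖ ≤ 2 * Real.pi * M * R + L / R := by
    intro R hR
    refine (norm_integral_le_lintegral_norm _).trans
      (ENNReal.toReal_le_of_le_ofReal (by positivity) ?_)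
    calc ∫⁻ y, ENNReal.ofReal ‖(‖x - y‖ ^ 2)⁻¹ • ρ y • (x - y)‖
        = ∫⁻ y, ENNReal.ofReal (ρ y * ‖x - y‖⁻¹) := by simp_rw [hnorm]
      _ ≤ ENNReal.ofReal M * ENNReal.ofReal (2 * Real.pi * R) + ENNReal.ofReal (L / R) := by
        rw [← setLIntegral_ball_inv_norm_sub_fin_two x hR.le]
        exact lintegral_mul_inv_norm_sub_le hpos hint hρM x hR
      _ = ENNReal.ofReal (2 * Real.pi * M * R + L / R) := by
        rw [← ENNReal.ofReal_mul (by positivity),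
          ← ENNReal.ofReal_add (by positivity) (by positivity)]
        ring_nf
  calc ‖∫ y, (‖x - y‖ ^ 2)⁻¹ • ρ y • (x - y)‖ ≤ 2 * √(2 * Real.pi * M * L) :=
        le_two_mul_sqrt_mul_of_forall_le_mul_add_div (by positivity) hL hsplit
    _ = 2 * √(2 * Real.pi) * √L * √M := by
        rw [Real.sqrt_mul (by positivity), Real.sqrt_mul (by positivity)]
        ring

/-- For a nonnegative, measurable, integrable and essentially bounded density `ρ` on `ℝ²`,
the field `E(x) = ∫ ((x−y)/|x−y|²) ρ(y) dy` satisfies the pointwise bound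
`|E(x)| ≤ 2 √(2π) ‖ρ‖_{L¹}^{1/2} ‖ρ‖_{L^∞}^{1/2}`. -/
theorem field_Linfty_bound (ρ : R2 → ℝ) (hmeas : Measurable ρ) (hpos : ∀ x, 0 ≤ ρ x)
    (hint : Integrable ρ) (hbdd : MemLp ρ ⊤ volume) (x : R2) :
    ‖∫ y, (‖x - y‖ ^ 2)⁻¹ • ρ y • (x - y)‖
      ≤ 2 * Real.sqrt (2 * Real.pi) * Real.sqrt (∫ y, ρ y)
        * Real.sqrt (eLpNorm ρ ⊤ volume).toReal :=
  field_Linfty_bound_general ρ hpos hint hbdd x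
end

section
/- Let T > 0 and let (F, d) be a complete metric space. Let (f_n)_{n∈ℕ} be a sequence of continuous maps from [0,T] to F such that: (1) for every t ∈ [0,T], the set {f_n(t) : n ∈ ℕ} is relatively compact in F; and (2) there exist C > 0 and a sequence r_n → 0 such that d(f_n(t), f_n(s)) ≤ C|t−s| + r_n for all t, s ∈ [0,T] and all n ∈ ℕ. Then the sequence (f_n)_{n∈ℕ} is relatively compact in C([0,T], F) equipped with the uniform distance. -/
/-- Ascoli-type compactness with vanishing equicontinuity defect: if `f_n : [0,T] → F`
are continuous maps into a complete metric space with pointwise relatively compact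
values, and `d(f_n(t), f_n(s)) ≤ C|t−s| + r_n` with `r_n → 0`, then `(f_n)` is
relatively compact in `C([0,T], F)` for the uniform distance. -/
theorem ascoli_with_defect (T : ℝ) (hT : 0 < T) (F : Type*) [MetricSpace F]
    [CompleteSpace F] (f : ℕ → C(Set.Icc (0 : ℝ) T, F))
    (h1 : ∀ t : Set.Icc (0 : ℝ) T, IsCompact (closure (Set.range fun n => f n t)))
    (C : ℝ) (hC : 0 < C) (r : ℕ → ℝ) (hr : Filter.Tendsto r Filter.atTop (nhds 0))
    (h2 : ∀ n, ∀ t s : Set.Icc (0 : ℝ) T, dist (f n t) (f n s) ≤ C * dist t s + r n) :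
    IsCompact (closure (Set.range f)) := by
  classical
  have htb : TotallyBounded (Set.range f) := by
    rw [Metric.totallyBounded_iff]
    intro ε hε
    have hε6 : (0 : ℝ) < ε / 6 := by positivity
    -- choose N with r n < ε/6 for n ≥ N
    obtain ⟨N, hN⟩ := (Metric.tendsto_atTop.mp hr (ε / 6) hε6)
    have hrN : ∀ n, N ≤ n → r n < ε / 6 := by
      intro n hn
      have := hN n hn
      rw [Real.dist_eq, sub_zero] at this
      exact lt_of_le_of_lt (le_abs_self _) this
    -- finite grid in [0,T] with mesh δ = (ε/6)/C
    set δ : ℝ := (ε / 6) / C with hδdef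
    have hδ : 0 < δ := by positivity
    obtain ⟨S, hSfin, hScov⟩ :=
      Metric.totallyBounded_iff.mp (isCompact_univ (X := Set.Icc (0 : ℝ) T)).totallyBounded δ hδ
    haveI : Fintype ↥S := hSfin.fintype
    set g : ℕ → (↥S → F) := fun n s => f n ↑s with hgdef
    have hgtb : TotallyBounded (Set.range fun n => g (n + N)) := by
      have hcomp : IsCompact (Set.pi Set.univ fun s : ↥S => closure (Set.range fun n => f n ↑s)) :=
        isCompact_univ_pi fun s => h1 ↑s
      refine hcomp.totallyBounded.subset ?_
      rintro _ ⟨n, rfl⟩ s _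
      exact subset_closure ⟨n + N, rfl⟩
    obtain ⟨A, hAsub, hAfin, hAcov⟩ := totallyBounded_iff_subset.mp hgtb
      {p : (↥S → F) × (↥S → F) | dist p.1 p.2 < ε / 6} (Metric.dist_mem_uniformity hε6)
    have hA' : ∀ y ∈ A, ∃ m, N ≤ m ∧ g m = y := by
      intro y hy
      obtain ⟨k, hk⟩ := hAsub hy
      exact ⟨k + N, Nat.le_add_left _ _, hk⟩
    set φ : (↥S → F) → ℕ := fun y =>
      if h : ∃ m, N ≤ m ∧ g m = y then h.choose else 0 with hφdef
    refine ⟨f '' ({k | k < N} ∪ φ '' A), ?_, ?_⟩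
    · exact ((Set.finite_Iio N).union (hAfin.image φ)).image f
    · rintro _ ⟨n, rfl⟩
      by_cases hn : n < N
      · exact Set.mem_iUnion₂.mpr ⟨f n, ⟨n, Or.inl hn, rfl⟩, by simp [Metric.mem_ball, hε]⟩
      · push_neg at hn
        have hmemg : g n ∈ Set.range fun k => g (k + N) :=
          ⟨n - N, by simp only [Nat.sub_add_cancel hn]⟩
        obtain ⟨y, hyA, hd⟩ := Set.mem_iUnion₂.mp (hAcov hmemg)
        have hdist : dist (g n) y < ε / 6 := hd
        have hy' := hA' y hyA
        have hm : N ≤ φ y ∧ g (φ y) = y := by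
          simp only [hφdef, dif_pos hy']
          exact hy'.choose_spec
        set m := φ y with hmdef
        refine Set.mem_iUnion₂.mpr ⟨f m, ⟨m, Or.inr ⟨y, hyA, rfl⟩, rfl⟩, ?_⟩
        rw [Metric.mem_ball]
        have key : ∀ t : Set.Icc (0 : ℝ) T, dist (f n t) (f m t) ≤ 5 * (ε / 6) := by
          intro t
          obtain ⟨s, hsS, hts⟩ := Set.mem_iUnion₂.mp (hScov (Set.mem_univ t))
          have hts' : dist t s < δ := hts
          have hCd : C * dist t s ≤ ε / 6 := by
            have h1' : C * dist t s ≤ C * δ :=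
              mul_le_mul_of_nonneg_left (le_of_lt hts') (le_of_lt hC)
            have : C * δ = ε / 6 := by
              rw [hδdef]; field_simp
            linarith
          have hb1 : dist (f n t) (f n s) ≤ ε / 6 + ε / 6 := by
            have := h2 n t s
            have hrn := hrN n hn
            linarith
          have hb3 : dist (f m s) (f m t) ≤ ε / 6 + ε / 6 := by
            have := h2 m s t
            have hrm := hrN m hm.1
            rw [dist_comm s t] at this
            linarith
          have hb2 : dist (f n s) (f m s) ≤ ε / 6 := by
            have hcoord : dist (g n ⟨s, hsS⟩) (g m ⟨s, hsS⟩) ≤ dist (g n) (g m) :=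
              dist_le_pi_dist (g n) (g m) ⟨s, hsS⟩
            have heq : dist (g n) (g m) = dist (g n) y := by rw [hm.2]
            exact le_trans (le_trans hcoord (le_of_eq heq)) (le_of_lt hdist)
          calc dist (f n t) (f m t)
              ≤ dist (f n t) (f n s) + dist (f n s) (f m s) + dist (f m s) (f m t) :=
                dist_triangle4 _ _ _ _
            _ ≤ (ε / 6 + ε / 6) + ε / 6 + (ε / 6 + ε / 6) := by
                gcongr
            _ = 5 * (ε / 6) := by ring
        have : dist (f n) (f m) ≤ 5 * (ε / 6) :=
          (ContinuousMap.dist_le (by positivity)).mpr key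
        linarith
  exact TotallyBounded.isCompact_of_isClosed htb.closure isClosed_closure
end
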